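/- Let S be a Tribonacci representation set with 3 ∈ S and let g = ∑_{i∈S} T(i). Then the number of positive integers m ≤ g whose Tribonacci representation set contains 3 equals g − ∑_{i∈S, i≥4} T(i−1). -/

import Mathlib

/-!
Let `C n` count the `m < n` having a representation that contains `3`. For `k ≥ 4`, a
representation of `trib k + m` with `m < trib (k - 1) + trib (k - 2)` must contain `k`
(greedy choice), and removing `k` leaves a representation of `m`; conversely `k` can be
added to any representation of such an `m`. Hence `C (trib k + g) = C (trib k) + C g`
for `g ≤ trib (k - 1) + trib (k - 2)`. Applied to `trib (k + 1) = trib k + trib (k - 1) +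
trib (k - 2)` this makes `C (trib k)` satisfy the Tribonacci recursion, so
`C (trib k) = trib k - trib (k - 1)`; applied along the parts of a representation `S`
of `g` it gives `C g = ∑ i ∈ S, (trib i - trib (i - 1))`. The count in the theorem is
`C (g + 1) = C g + 1`, and the `+ 1` is the term `trib (3 - 1)` of the sum.
-/

def trib : ℕ → ℕ
  | 0 => 0
  | 1 => 0
  | 2 => 1
  | n + 3 => trib (n + 2) + trib (n + 1) + trib n

def IsTribRep (S : Finset ℕ) : Prop :=
  (∀ i ∈ S, 3 ≤ i) ∧ ∀ i : ℕ, ¬(i ∈ S ∧ i + 1 ∈ S ∧ i + 2 ∈ S)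

open Finset

lemma trib_add_three (n : ℕ) : trib (n + 3) = trib (n + 2) + trib (n + 1) + trib n := rfl

lemma trib_mono : Monotone trib := by
  refine monotone_nat_of_le_succ fun n => ?_
  match n with
  | 0 | 1 => decide
  | n + 2 => rw [trib_add_three]; omega

lemma trib_eq_of_three_le {n : ℕ} (hn : 3 ≤ n) :
    trib n = trib (n - 1) + trib (n - 2) + trib (n - 3) := by
  obtain ⟨m, rfl⟩ := Nat.exists_eq_add_of_le' hn
  exact trib_add_three m

lemma lt_of_sum_trib_lt {S : Finset ℕ} {k j : ℕ} (h : ∑ i ∈ S, trib i < trib k)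
    (hj : j ∈ S) : j < k :=
  trib_mono.reflect_lt ((single_le_sum (fun _ _ => Nat.zero_le _) hj).trans_lt h)

namespace IsTribRep

lemma mono {S T : Finset ℕ} (hS : IsTribRep S) (hTS : T ⊆ S) : IsTribRep T :=
  ⟨fun i hi => hS.1 i (hTS hi), fun i hi => hS.2 i ⟨hTS hi.1, hTS hi.2.1, hTS hi.2.2⟩⟩

lemma sum_lt_trib {S : Finset ℕ} {n : ℕ} (hS : IsTribRep S) (hn : 2 ≤ n)
    (hlt : ∀ i ∈ S, i < n) : ∑ i ∈ S, trib i < trib n := by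
  induction n using Nat.strong_induction_on generalizing S with
  | _ n ih =>
  by_cases h1 : n - 1 ∈ S
  swap
  · obtain rfl | hn3 : n = 2 ∨ 3 ≤ n := by omega
    · have hS_empty : S = ∅ :=
        eq_empty_of_forall_notMem fun i hi => by have := hS.1 i hi; have := hlt i hi; omega
      simp [hS_empty, trib]
    · have hlt' : ∀ i ∈ S, i < n - 1 := fun i hi => by
        have := hlt i hi; have : i ≠ n - 1 := fun h => h1 (h ▸ hi); omega
      exact (ih (n - 1) (by omega) hS (by omega) hlt').trans_le (trib_mono (Nat.sub_le n 1))
  have hn4 : 4 ≤ n := by have := hS.1 _ h1; omega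
  have hrec := trib_eq_of_three_le (n := n) (by omega)
  rw [← add_sum_erase S trib h1]
  by_cases h2 : n - 2 ∈ S
  · have h3 : n - 3 ∉ S := fun h3 => hS.2 (n - 3)
      ⟨h3, by rwa [show n - 3 + 1 = n - 2 by omega], by rwa [show n - 3 + 2 = n - 1 by omega]⟩
    have hn5 : 5 ≤ n := by have := hS.1 _ h2; omega
    rw [← add_sum_erase _ trib (mem_erase.2 ⟨by omega, h2⟩)]
    have hlt' : ∀ i ∈ (S.erase (n - 1)).erase (n - 2), i < n - 3 := fun i hi => by
      simp only [mem_erase] at hi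
      have := hlt i hi.2.2; have : i ≠ n - 3 := fun h => h3 (h ▸ hi.2.2); omega
    have := ih (n - 3) (by omega) (hS.mono ((erase_subset _ _).trans (erase_subset _ _)))
      (by omega) hlt'
    omega
  · have hlt' : ∀ i ∈ S.erase (n - 1), i < n - 2 := fun i hi => by
      simp only [mem_erase] at hi
      have := hlt i hi.2; have : i ≠ n - 2 := fun h => h2 (h ▸ hi.2); omega
    have := ih (n - 2) (by omega) (hS.mono (erase_subset _ _)) (by omega) hlt'
    omega

lemma mem_of_trib_le_sum {S : Finset ℕ} {k : ℕ} (hS : IsTribRep S) (hk : 2 ≤ k)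
    (hle : trib k ≤ ∑ i ∈ S, trib i) (hlt : ∑ i ∈ S, trib i < trib (k + 1)) :
    k ∈ S := by
  by_contra hkS
  have hS_lt : ∀ i ∈ S, i < k := fun i hi =>
    lt_of_le_of_ne (Nat.lt_succ_iff.1 (lt_of_sum_trib_lt hlt hi)) fun h => hkS (h ▸ hi)
  exact (hS.sum_lt_trib hk hS_lt).not_ge hle

lemma insert_of_lt {R : Finset ℕ} {a : ℕ} (hR : IsTribRep R) (ha : 1 ≤ a)
    (hlt : ∀ i ∈ R, i < a + 2) (hpair : ¬(a ∈ R ∧ a + 1 ∈ R)) :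
    IsTribRep (insert (a + 2) R) := by
  refine ⟨fun i hi => ?_, fun i ⟨h0, h1, h2⟩ => ?_⟩
  · rcases mem_insert.1 hi with rfl | hi
    · omega
    · exact hR.1 i hi
  · simp only [mem_insert] at h0 h1 h2
    rcases h2 with h2 | h2
    · obtain rfl : i = a := by omega
      exact hpair ⟨h0.resolve_left (by omega), h1.resolve_left (by omega)⟩
    · have := hlt _ h2
      exact hR.2 i ⟨h0.resolve_left (by omega), h1.resolve_left (by omega), h2⟩

end IsTribRep

def TribRepContainsThree (m : ℕ) : Prop :=
  ∃ S : Finset ℕ, IsTribRep S ∧ 3 ∈ S ∧ m = ∑ i ∈ S, trib i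

noncomputable instance : DecidablePred TribRepContainsThree := Classical.decPred _

lemma TribRepContainsThree.pos {m : ℕ} (h : TribRepContainsThree m) : 0 < m := by
  obtain ⟨S, -, h3, rfl⟩ := h
  exact (show 0 < trib 3 by decide).trans_le (single_le_sum (fun _ _ => Nat.zero_le _) h3)

lemma tribRepContainsThree_trib_add_iff {k m : ℕ} (hm : m < trib (k + 3) + trib (k + 2)) :
    TribRepContainsThree (trib (k + 4) + m) ↔ TribRepContainsThree m := by
  have hrec : trib (k + 5) = trib (k + 4) + trib (k + 3) + trib (k + 2) := trib_add_three _
  have hrec' : trib (k + 4) = trib (k + 3) + trib (k + 2) + trib (k + 1) := trib_add_three _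
  constructor
  · rintro ⟨S, hS, h3, hsum⟩
    have hk : k + 4 ∈ S := hS.mem_of_trib_le_sum (by omega) (by omega)
      (by rw [show k + 4 + 1 = k + 5 from rfl]; omega)
    refine ⟨S.erase (k + 4), hS.mono (erase_subset _ _), mem_erase.2 ⟨by omega, h3⟩, ?_⟩
    have := add_sum_erase S trib hk
    omega
  · rintro ⟨R, hR, h3, rfl⟩
    have hlt : ∀ i ∈ R, i < k + 4 := fun i hi => lt_of_sum_trib_lt (by omega) hi
    have hpair : ¬(k + 2 ∈ R ∧ k + 3 ∈ R) := fun ⟨h2, h3⟩ => by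
      have := sum_le_sum_of_subset (f := trib) (insert_subset h3 (singleton_subset_iff.2 h2))
      rw [sum_pair (by omega)] at this
      omega
    refine ⟨insert (k + 4) R, hR.insert_of_lt (by omega) hlt hpair, mem_insert_of_mem h3, ?_⟩
    rw [sum_insert fun h => (hlt _ h).false]

lemma count_trib_add {k g : ℕ} (hg : g ≤ trib (k + 3) + trib (k + 2)) :
    Nat.count TribRepContainsThree (trib (k + 4) + g) =
      Nat.count TribRepContainsThree (trib (k + 4)) + Nat.count TribRepContainsThree g := by
  rw [Nat.count_add]
  congr 1
  simp only [Nat.count_eq_card_filter_range]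
  congr 1
  exact filter_congr fun j hj => tribRepContainsThree_trib_add_iff ((mem_range.1 hj).trans_le hg)

lemma count_trib (n : ℕ) :
    Nat.count TribRepContainsThree (trib (n + 3)) = trib (n + 1) + trib n := by
  have hzero : ¬TribRepContainsThree 0 := fun h => h.pos.false
  have hone : TribRepContainsThree 1 := ⟨{3}, ⟨by simp, by simp⟩, by simp, rfl⟩
  induction n using Nat.strong_induction_on with
  | _ n ih =>
  match n with
  | 0 => simp [Nat.count_one, hzero, trib]
  | 1 => simp [Nat.count_succ, hzero, hone, trib]
  | 2 =>
    have h := count_trib_add (k := 0) (g := trib 4) (by decide)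
    rw [show trib (2 + 3) = trib (0 + 4) + trib 4 from rfl, h, ih 1 (by omega)]
    rfl
  | n + 3 =>
    have split_top : Nat.count TribRepContainsThree (trib (n + 6)) =
        Nat.count TribRepContainsThree (trib (n + 5)) +
          Nat.count TribRepContainsThree (trib (n + 4) + trib (n + 3)) := by
      rw [trib_add_three (n + 3), add_assoc]
      exact count_trib_add le_rfl
    have split_next : Nat.count TribRepContainsThree (trib (n + 4) + trib (n + 3)) =
        Nat.count TribRepContainsThree (trib (n + 4)) +
          Nat.count TribRepContainsThree (trib (n + 3)) :=
      count_trib_add (Nat.le_add_right _ _)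
    rw [split_top, split_next, ih n (by omega), ih (n + 1) (by omega), ih (n + 2) (by omega),
      trib_add_three (n + 1), trib_add_three n]
    ring

lemma IsTribRep.count_sum_add_sum_trib_pred {S : Finset ℕ} (hS : IsTribRep S) :
    Nat.count TribRepContainsThree (∑ i ∈ S, trib i) + ∑ i ∈ S, trib (i - 1) =
      ∑ i ∈ S, trib i := by
  induction S using Finset.induction_on_max with
  | empty => simp
  | insert a s hlt ih =>
    have has : a ∉ s := fun h => (hlt a h).false
    have hs := hS.mono (subset_insert a s)
    have ha : 3 ≤ a := hS.1 a (mem_insert_self a s)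
    specialize ih hs
    obtain rfl | ha4 := ha.eq_or_lt
    · have hs_empty : s = ∅ :=
        eq_empty_of_forall_notMem fun i hi => by have := hs.1 i hi; have := hlt i hi; omega
      subst hs_empty
      rw [sum_insert has, sum_insert has, sum_empty, sum_empty, add_zero, count_trib 0]
      rfl
    obtain ⟨k, rfl⟩ : ∃ k, a = k + 4 := ⟨a - 4, by omega⟩
    have hbound : ∑ i ∈ insert (k + 4) s, trib i < trib (k + 5) :=
      hS.sum_lt_trib (by omega) fun i hi => by
        rcases mem_insert.1 hi with rfl | hi
        · omega
        · exact (hlt i hi).trans (by omega)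
    rw [sum_insert has] at hbound ⊢
    have hrec : trib (k + 5) = trib (k + 4) + trib (k + 3) + trib (k + 2) := trib_add_three _
    have hrec' : trib (k + 4) = trib (k + 3) + trib (k + 2) + trib (k + 1) := trib_add_three _
    have hcount : Nat.count TribRepContainsThree (trib (k + 4)) = trib (k + 2) + trib (k + 1) :=
      count_trib (k + 1)
    rw [sum_insert has, count_trib_add (by omega), hcount]
    simp only [show k + 4 - 1 = k + 3 from rfl]
    omega

/-- If `S` is a Tribonacci representation set containing 3 and `g = ∑_{i∈S} T(i)`,
    then the number of positive integers `m ≤ g` whose Tribonacci representation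
    contains 3 equals `g − ∑_{i∈S, i≥4} T(i−1)`. -/
theorem row_number_formula (S : Finset ℕ) (hS : IsTribRep S) (h3 : 3 ∈ S) :
    (Set.ncard {m : ℕ | 1 ≤ m ∧ m ≤ ∑ i ∈ S, trib i ∧
        ∃ S' : Finset ℕ, IsTribRep S' ∧ 3 ∈ S' ∧ m = ∑ i ∈ S', trib i} : ℤ) =
      (↑(∑ i ∈ S, trib i) : ℤ) -
        ∑ i ∈ S.filter (fun i => 4 ≤ i), (trib (i - 1) : ℤ) := by
  have hset : {m : ℕ | 1 ≤ m ∧ m ≤ ∑ i ∈ S, trib i ∧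
      ∃ S' : Finset ℕ, IsTribRep S' ∧ 3 ∈ S' ∧ m = ∑ i ∈ S', trib i} =
      ↑({m ∈ range (∑ i ∈ S, trib i + 1) | TribRepContainsThree m}) := by
    ext m
    simp only [Set.mem_ofPred_eq, coe_filter, mem_range]
    exact ⟨fun ⟨_, hm, hP⟩ => ⟨by omega, hP⟩,
      fun ⟨hm, hP⟩ => ⟨hP.pos, by omega, hP⟩⟩
  have hcount :=
    (Nat.count_succ_eq_succ_count_iff (p := TribRepContainsThree)).2 ⟨S, hS, h3, rfl⟩
  have hthree : {i ∈ S | ¬4 ≤ i} = {3} := by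
    ext i
    simp only [mem_filter, mem_singleton]
    exact ⟨fun ⟨hi, hi4⟩ => by have := hS.1 i hi; omega, fun h => h ▸ ⟨h3, by omega⟩⟩
  have hpred := sum_filter_add_sum_filter_not S (fun i => 4 ≤ i) (fun i => trib (i - 1))
  rw [hthree, sum_singleton] at hpred
  have hmain := hS.count_sum_add_sum_trib_pred
  rw [hset, Set.ncard_coe_finset, ← Nat.count_eq_card_filter_range, hcount, ← Nat.cast_sum]
  have htrib2 : trib (3 - 1) = 1 := rfl
  omega
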